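/- arXiv:2306.06216 — 2 statements merged into one kernel-verified Lean document; each statement's English description precedes it below -/
import Mathlib

section
/- All colourations of A_n are mutation equivalent: for m ≥ 1, n ≥ 1 and any two tuples (c_1,…,c_{n−1}) and (c'_1,…,c'_{n−1}) in {0,1,…,m}^{n−1}, the m-coloured quiver with vertices 1,…,n and arrow pairs i+1 →(c_i) i, i →(m−c_i) i+1 for 1 ≤ i ≤ n−1 is mutation equivalent to the corresponding quiver with colours (c'_1,…,c'_{n−1}). -/
namespace MutClassAn

open Finset

variable {V : Type} [Fintype V] [DecidableEq V]

/-- `M i j c` is the number of arrows from `i` to `j` of colour `c`.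
An `m`-coloured quiver has no loops, is monochromatic and skew-symmetric
(`c.rev = m - c` in `Fin (m+1)`). -/
def IsColouredQuiver {m : ℕ} (M : V → V → Fin (m + 1) → ℕ) : Prop :=
  (∀ i c, M i i c = 0) ∧
  (∀ i j c c', M i j c ≠ 0 → M i j c' ≠ 0 → c = c') ∧
  (∀ i j c, M i j c = M j i c.rev)

/-- A coloured quiver is simple if there is at most one arrow between any two
vertices in each direction. -/
def IsSimpleCQ {m : ℕ} (M : V → V → Fin (m + 1) → ℕ) : Prop :=
  ∀ i j : V, (∑ c, M i j c) ≤ 1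

/-- Adjacency in the underlying graph. -/
def CQAdj {m : ℕ} (M : V → V → Fin (m + 1) → ℕ) (i j : V) : Prop :=
  i ≠ j ∧ ∃ c, M i j c ≠ 0

/-- The colour of the (unique, for simple quivers) arrow from `i` to `j`. -/
def colourOf {m : ℕ} (M : V → V → Fin (m + 1) → ℕ) (i j : V) : ℕ :=
  ∑ c : Fin (m + 1), M i j c * c.val

/-- Buan–Thomas coloured quiver mutation at the vertex `j`. -/
def mutate {m : ℕ} (M : V → V → Fin (m + 1) → ℕ) (j : V) :
    V → V → Fin (m + 1) → ℕ := fun i k c =>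
  if k = j then M i k (c + 1)
  else if i = j then M i k (c - 1)
  else ((M i k c : ℤ) - ∑ t ∈ Finset.univ.filter (fun t => t ≠ c), (M i k t : ℤ)
      + ((M i j c : ℤ) - (M i j (c - 1) : ℤ)) * (M j k 0 : ℤ)
      + (M i j (Fin.last m) : ℤ) * ((M j k c : ℤ) - (M j k (c + 1) : ℤ))).toNat

/-- Mutation equivalence: the equivalence relation generated by single mutations. -/
def MutEquiv {m : ℕ} (M M' : V → V → Fin (m + 1) → ℕ) : Prop :=
  Relation.EqvGen (fun A B => ∃ v, mutate A v = B) M M'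

/-- A hole is an induced cycle of length at least `4` in the underlying graph. -/
def HasHole {m : ℕ} (M : V → V → Fin (m + 1) → ℕ) : Prop :=
  ∃ k : ℕ, 4 ≤ k ∧ ∃ x : ZMod k → V, Function.Injective x ∧
    (∀ i, CQAdj M (x i) (x (i + 1))) ∧
    ∀ i j : ZMod k, i ≠ j → j ≠ i + 1 → i ≠ j + 1 → ¬ CQAdj M (x i) (x j)

/-- A clique: a set of pairwise adjacent vertices. -/
def IsCliqueCQ {m : ℕ} (M : V → V → Fin (m + 1) → ℕ) (S : Set V) : Prop :=
  S.Pairwise (CQAdj M)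

/-- The set of neighbours of a vertex. -/
def nbrs {m : ℕ} (M : V → V → Fin (m + 1) → ℕ) (v : V) : Set V :=
  {u | CQAdj M v u}

/-- Connectedness of the underlying graph. -/
def CQConnected {m : ℕ} (M : V → V → Fin (m + 1) → ℕ) : Prop :=
  ∀ u w : V, Relation.ReflTransGen (CQAdj M) u w

/-- Condition (1) of the class `𝒬ₙᵐ`: the neighbourhood of every vertex is covered
by two cliques of sizes `r, k ≤ m + 2` with `r + k = z + 2`, with no arrows between
the two cliques away from the vertex. -/
def Cond1 {m : ℕ} (M : V → V → Fin (m + 1) → ℕ) : Prop :=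
  ∀ v : V, (nbrs M v).Nonempty →
    ∃ R K : Finset V, v ∈ R ∧ v ∈ K ∧ IsCliqueCQ M ↑R ∧ IsCliqueCQ M ↑K ∧
      R.card + K.card = (nbrs M v).ncard + 2 ∧ R.card ≤ m + 2 ∧ K.card ≤ m + 2 ∧
      (∀ u ∈ nbrs M v, u ∈ R ∨ u ∈ K) ∧
      ∀ a ∈ R, a ≠ v → ∀ b ∈ K, b ≠ v → ¬ CQAdj M a b

/-- Condition (2) of the class `𝒬ₙᵐ`: every triangle inside a clique has colour
sum `m - 1` along one of its two orientations (sums taken in `ℤ`). -/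
def Cond2 {m : ℕ} (M : V → V → Fin (m + 1) → ℕ) : Prop :=
  ∀ v1 v2 v3 : V, v1 ≠ v2 → v2 ≠ v3 → v1 ≠ v3 →
    CQAdj M v1 v2 → CQAdj M v2 v3 → CQAdj M v1 v3 →
    ((colourOf M v2 v1 : ℤ) + (colourOf M v1 v3 : ℤ) + (colourOf M v3 v2 : ℤ)
        = (m : ℤ) - 1 ∨
      ((m : ℤ) - colourOf M v2 v1) + ((m : ℤ) - colourOf M v1 v3)
          + ((m : ℤ) - colourOf M v3 v2) = (m : ℤ) - 1)

/-- Membership in the class `𝒬ₙᵐ` (`n` being the cardinality of the vertex set). -/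
def MemQClass {m : ℕ} (M : V → V → Fin (m + 1) → ℕ) : Prop :=
  IsColouredQuiver M ∧ IsSimpleCQ M ∧ CQConnected M ∧ ¬ HasHole M ∧ Cond1 M ∧ Cond2 M

/-- An `Aₙ`-quiver: the underlying graph is the path graph on the vertex set. -/
def IsAnQuiver {m : ℕ} (M : V → V → Fin (m + 1) → ℕ) : Prop :=
  ∃ e : Fin (Fintype.card V) ≃ V,
    ∀ i j : Fin (Fintype.card V),
      CQAdj M (e i) (e j) ↔ (i.val + 1 = j.val ∨ j.val + 1 = i.val)

/-- The coloured quiver on `Fin n` whose underlying graph is the path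
`0 — 1 — ⋯ — (n-1)`, with the arrow `j+1 → j` coloured `c j` and the arrow
`j → j+1` coloured `m - c j`. -/
def pathQuiver (m n : ℕ) (c : ℕ → Fin (m + 1)) :
    Fin n → Fin n → Fin (m + 1) → ℕ := fun i j d =>
  if j.val + 1 = i.val ∧ d = c j.val then 1
  else if i.val + 1 = j.val ∧ d = (c i.val).rev then 1 else 0

/-- Delete all arrows between vertices of `S`. -/
def deleteArrows {m : ℕ} (M : V → V → Fin (m + 1) → ℕ) (S : Finset V) :
    V → V → Fin (m + 1) → ℕ := fun i j c =>
  if i ∈ S ∧ j ∈ S then 0 else M i j c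

/-- The connected component of `u` is an `A_k`-quiver (a path) for some `k ≥ 1`. -/
def ComponentIsPath {m : ℕ} (M : V → V → Fin (m + 1) → ℕ) (u : V) : Prop :=
  ∃ (k : ℕ) (x : Fin k → V), 1 ≤ k ∧ Function.Injective x ∧
    Set.range x = {w | Relation.ReflTransGen (CQAdj M) u w} ∧
    ∀ i j : Fin k, CQAdj M (x i) (x j) ↔ (i.val + 1 = j.val ∨ j.val + 1 = i.val)

/-- An almost extremal clique: deleting its arrows leaves a connected component
which is an `A_k`-quiver for some `k ≥ 1`. -/
def AlmostExtremalClique {m : ℕ} (M : V → V → Fin (m + 1) → ℕ) (S : Finset V) : Prop :=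
  IsCliqueCQ M ↑S ∧ ∃ u : V, ComponentIsPath (deleteArrows M S) u

/-- An extremal clique: deleting its arrows leaves a single-vertex component. -/
def ExtremalClique {m : ℕ} (M : V → V → Fin (m + 1) → ℕ) (S : Finset V) : Prop :=
  IsCliqueCQ M ↑S ∧
    ∃ u : V, {w | Relation.ReflTransGen (CQAdj (deleteArrows M S)) u w} = {u}

/-- A coloured clique structure on a vertex type: colours `c i j ∈ {0,…,m}` with
skew-symmetry `c j i = m - c i j` and the triangle condition. -/
def IsCliqueColouring (m : ℕ) {W : Type} (c : W → W → ℕ) : Prop :=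
  (∀ i j : W, i ≠ j → c i j ≤ m) ∧
  (∀ i j : W, i ≠ j → c i j + c j i = m) ∧
  ∀ i j l : W, i ≠ j → j ≠ l → i ≠ l →
    ((c i j : ℤ) + (c j l : ℤ) + (c l i : ℤ) = (m : ℤ) - 1 ∨
      (c i j : ℤ) + (c j l : ℤ) + (c l i : ℤ) = 2 * (m : ℤ) + 1)

/-- Cyclic successor in `Fin k`. -/
def cyc {k : ℕ} (i : Fin k) : Fin k :=
  ⟨(i.val + 1) % k, Nat.mod_lt _ i.pos⟩

/-- The weight of the Hamiltonian cycle `x 0 → x 1 → ⋯ → x (k-1) → x 0`: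
the sum of the colours of its arrows. -/
def cycleWeight {W : Type} (c : W → W → ℕ) {k : ℕ} (x : Fin k → W) : ℤ :=
  ∑ i : Fin k, (c (x i) (x (cyc i)) : ℤ)

/-- The Hamiltonian cycle on `k+1` vertices obtained from the cycle
`x 0 → ⋯ → x (k-1) → x 0` by inserting the vertex `x (Fin.last k)`
immediately after `x j`. -/
def insertAfter {W : Type} {k : ℕ} (x : Fin (k + 1) → W) (j : Fin k) :
    Fin (k + 1) → W := fun i =>
  if i = 0 then x (Fin.last k)
  else x (Fin.castSucc ⟨(j.val + i.val) % k, Nat.mod_lt _ j.pos⟩)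

end MutClassAn

/-!
Mutation at the last vertex of the path turns the colour of the last edge by one. Mutation at
an interior vertex `v` with `c (v - 1) ≠ 0` and `c v ≠ m` creates no new arrows and replaces
`(c (v - 1), c v)` by `(c (v - 1) + 1, c v - 1)`. So if all edges right of edge `j` have colour
`0` and `c j ≠ 0`, mutating at `j + 1` raises `c j` at the price of an `m` on edge `j + 1`, which
is pushed in the same way to the end of the path, where it turns back into `0`. Raising `c j`
until it wraps around to `0`, from right to left, connects every colouration to the zero one.
-/

namespace MutClassAn

section Correction

variable {V : Type} {m : ℕ} {M : V → V → Fin (m + 1) → ℕ} {i j k : V} {c : Fin (m + 1)}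

/-- The terms of coloured mutation at `j` that come from the paths `i → j → k`. -/
def mutationCorrection (M : V → V → Fin (m + 1) → ℕ) (j i k : V) (c : Fin (m + 1)) : ℤ :=
  ((M i j c : ℤ) - M i j (c - 1)) * M j k 0
    + M i j (Fin.last m) * ((M j k c : ℤ) - M j k (c + 1))

theorem mutationCorrection_eq_zero (h0 : M j k 0 = 0) (hlast : M i j (Fin.last m) = 0) :
    mutationCorrection M j i k c = 0 := by
  simp [mutationCorrection, h0, hlast]

theorem mutationCorrection_of_left_eq_zero (h : ∀ e, M i j e = 0) :
    mutationCorrection M j i k c = 0 := by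
  simp [mutationCorrection, h]

theorem mutationCorrection_of_right_eq_zero (h : ∀ e, M j k e = 0) :
    mutationCorrection M j i k c = 0 := by
  simp [mutationCorrection, h]

/-- Mutation creates no loops: along the 2-cycle `i → j → i` the two correction terms cancel. -/
theorem mutationCorrection_self (hM : IsColouredQuiver M) : mutationCorrection M j i i c = 0 := by
  obtain ⟨-, hmono, hskew⟩ := hM
  by_cases hr : M i j (Fin.last m) = 0
  · exact mutationCorrection_eq_zero (by rw [hskew, Fin.rev_zero, hr]) hr
  set r := M i j (Fin.last m)
  have hij : ∀ e, M i j e = if e = Fin.last m then r else 0 := fun e => by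
    split_ifs with he
    · rw [he]
    · by_contra h; exact he (hmono _ _ _ _ h hr)
  have hji : ∀ e, M j i e = if e = 0 then r else 0 := fun e => by
    rw [hskew, hij]
    simp only [Fin.rev_eq_iff, Fin.rev_last]
  have hpred : c - 1 = Fin.last m ↔ c = 0 := by rw [sub_eq_iff_eq_add, Fin.last_add_one]
  have hsucc : c + 1 = 0 ↔ c = Fin.last m := by rw [← Fin.last_add_one, add_left_inj]
  simp only [mutationCorrection, hij, hji, hpred, hsucc]
  split_ifs <;> simp

end Correction

section Mutation

variable {V : Type} [DecidableEq V] {m : ℕ} {M : V → V → Fin (m + 1) → ℕ} {i j k : V}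
  {c : Fin (m + 1)}

theorem MutEquiv.refl (M : V → V → Fin (m + 1) → ℕ) : MutEquiv M M :=
  Relation.EqvGen.refl _

theorem MutEquiv.symm {M M' : V → V → Fin (m + 1) → ℕ} (h : MutEquiv M M') :
    MutEquiv M' M :=
  Relation.EqvGen.symm _ _ h

theorem MutEquiv.trans {M M' M'' : V → V → Fin (m + 1) → ℕ} (h : MutEquiv M M')
    (h' : MutEquiv M' M'') : MutEquiv M M'' :=
  Relation.EqvGen.trans _ _ _ h h'

theorem mutEquiv_mutate (M : V → V → Fin (m + 1) → ℕ) (j : V) : MutEquiv M (mutate M j) :=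
  Relation.EqvGen.rel _ _ ⟨j, rfl⟩

theorem mutate_apply_right : mutate M j i j c = M i j (c + 1) :=
  if_pos rfl

theorem mutate_apply_left (hk : k ≠ j) : mutate M j j k c = M j k (c - 1) := by
  simp [mutate, hk]

theorem mutate_apply_of_ne (hi : i ≠ j) (hk : k ≠ j) (hsimple : ∑ t, M i k t ≤ 1)
    (hcorr : mutationCorrection M j i k c = 0) : mutate M j i k c = M i k c := by
  have hle : M i k c ≤ ∑ t, M i k t := Finset.single_le_sum (by simp) (Finset.mem_univ c)
  have hrest : ∑ t ∈ Finset.univ.filter (· ≠ c), (M i k t : ℤ) =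
      ∑ t, (M i k t : ℤ) - M i k c := by
    rw [Finset.filter_ne', Finset.sum_erase_eq_sub (Finset.mem_univ c)]
  have hsum : ∑ t, (M i k t : ℤ) = ((∑ t, M i k t : ℕ) : ℤ) := by push_cast; rfl
  unfold mutationCorrection at hcorr
  -- what is left is `(2 * M i k c - ∑ t, M i k t).toNat`, i.e. `M i k c` as the sum is `≤ 1`
  simp only [mutate, if_neg hk, if_neg hi, add_assoc, hcorr, add_zero, hrest, hsum]
  omega

end Mutation

section PathQuiver

variable {m n : ℕ} {c c' : ℕ → Fin (m + 1)} {i k : Fin n}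

theorem pathQuiver_of_succ_eq (h : (k : ℕ) + 1 = i) (d : Fin (m + 1)) :
    pathQuiver m n c i k d = if d = c k then 1 else 0 := by
  simp [pathQuiver, h, show (i : ℕ) + 1 ≠ k by omega]

theorem pathQuiver_of_eq_succ (h : (i : ℕ) + 1 = k) (d : Fin (m + 1)) :
    pathQuiver m n c i k d = if d = (c i).rev then 1 else 0 := by
  simp [pathQuiver, h, show (k : ℕ) + 1 ≠ i by omega]

theorem pathQuiver_of_not_adj (h₁ : (k : ℕ) + 1 ≠ i) (h₂ : (i : ℕ) + 1 ≠ k)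
    (d : Fin (m + 1)) :
    pathQuiver m n c i k d = 0 := by
  simp [pathQuiver, h₁, h₂]

theorem pathQuiver_apply_congr (hi : (i : ℕ) + 1 = k → c i = c' i)
    (hk : (k : ℕ) + 1 = i → c k = c' k) (d : Fin (m + 1)) :
    pathQuiver m n c i k d = pathQuiver m n c' i k d := by
  by_cases h₁ : (k : ℕ) + 1 = i
  · rw [pathQuiver_of_succ_eq h₁, pathQuiver_of_succ_eq h₁, hk h₁]
  by_cases h₂ : (i : ℕ) + 1 = k
  · rw [pathQuiver_of_eq_succ h₂, pathQuiver_of_eq_succ h₂, hi h₂]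
  rw [pathQuiver_of_not_adj h₁ h₂, pathQuiver_of_not_adj h₁ h₂]

theorem pathQuiver_congr (h : ∀ l, l + 1 < n → c l = c' l) :
    pathQuiver m n c = pathQuiver m n c' := by
  funext i k d
  exact pathQuiver_apply_congr (fun h' => h _ (by omega)) (fun h' => h _ (by omega)) d

theorem sum_pathQuiver_le_one (c : ℕ → Fin (m + 1)) (i k : Fin n) :
    ∑ d, pathQuiver m n c i k d ≤ 1 := by
  by_cases h₁ : (k : ℕ) + 1 = i
  · simp [pathQuiver_of_succ_eq h₁]
  by_cases h₂ : (i : ℕ) + 1 = k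
  · simp [pathQuiver_of_eq_succ h₂]
  simp [pathQuiver_of_not_adj h₁ h₂]

theorem isColouredQuiver_pathQuiver (c : ℕ → Fin (m + 1)) :
    IsColouredQuiver (pathQuiver m n c) := by
  refine ⟨fun i d => pathQuiver_of_not_adj (by omega) (by omega) d, fun i k d d' hd hd' => ?_,
    fun i k d => ?_⟩
  · by_cases h₁ : (k : ℕ) + 1 = i
    · simp only [pathQuiver_of_succ_eq h₁, ne_eq, ite_eq_right_iff] at hd hd'
      grind
    by_cases h₂ : (i : ℕ) + 1 = k
    · simp only [pathQuiver_of_eq_succ h₂, ne_eq, ite_eq_right_iff] at hd hd'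
      grind
    exact absurd (pathQuiver_of_not_adj h₁ h₂ d) hd
  · by_cases h₁ : (k : ℕ) + 1 = i
    · simp only [pathQuiver_of_succ_eq h₁, pathQuiver_of_eq_succ h₁, Fin.rev_inj]
    by_cases h₂ : (i : ℕ) + 1 = k
    · simp only [pathQuiver_of_eq_succ h₂, pathQuiver_of_succ_eq h₂, Fin.rev_eq_iff]
    rw [pathQuiver_of_not_adj h₁ h₂, pathQuiver_of_not_adj h₂ h₁]

end PathQuiver

section PathMutation

variable {m n : ℕ} {c c' : ℕ → Fin (m + 1)}

theorem mutate_pathQuiver (v : Fin n) (hleft : ∀ l : ℕ, l + 1 = v → c' l = c l + 1)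
    (hright : (v : ℕ) + 1 < n → c' v = c v - 1)
    (hother : ∀ l : ℕ, l + 1 ≠ v → l ≠ v → c' l = c l)
    (hcorr : ∀ i k : Fin n, i ≠ v → k ≠ v → i ≠ k → ∀ d,
      mutationCorrection (pathQuiver m n c) v i k d = 0) :
    mutate (pathQuiver m n c) v = pathQuiver m n c' := by
  funext i k d
  by_cases hk : k = v
  · subst hk
    rw [mutate_apply_right]
    by_cases h₁ : (k : ℕ) + 1 = i
    · simp only [pathQuiver_of_succ_eq h₁, hright (by omega), eq_sub_iff_add_eq]
    by_cases h₂ : (i : ℕ) + 1 = k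
    · simp only [pathQuiver_of_eq_succ h₂, hleft _ h₂, Fin.rev_add, eq_sub_iff_add_eq]
    rw [pathQuiver_of_not_adj h₁ h₂, pathQuiver_of_not_adj h₁ h₂]
  by_cases hi : i = v
  · subst hi
    rw [mutate_apply_left hk]
    by_cases h₁ : (k : ℕ) + 1 = i
    · simp only [pathQuiver_of_succ_eq h₁, hleft _ h₁, sub_eq_iff_eq_add]
    by_cases h₂ : (i : ℕ) + 1 = k
    · simp only [pathQuiver_of_eq_succ h₂, hright (by omega), Fin.rev_sub, sub_eq_iff_eq_add]
    rw [pathQuiver_of_not_adj h₁ h₂, pathQuiver_of_not_adj h₁ h₂]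
  have hiv : (i : ℕ) ≠ v := Fin.val_ne_of_ne hi
  have hkv : (k : ℕ) ≠ v := Fin.val_ne_of_ne hk
  rw [mutate_apply_of_ne hi hk (sum_pathQuiver_le_one c i k)]
  · exact pathQuiver_apply_congr (fun h => (hother _ (by omega) hiv).symm)
      (fun h => (hother _ (by omega) hkv).symm) d
  by_cases hik : i = k
  · subst hik
    exact mutationCorrection_self (isColouredQuiver_pathQuiver c)
  exact hcorr i k hi hk hik d

theorem mutate_pathQuiver_last {j : ℕ} (v : Fin n) (hv : (v : ℕ) = j + 1) (hn : j + 2 = n) :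
    mutate (pathQuiver m n c) v = pathQuiver m n (Function.update c j (c j + 1)) := by
  refine mutate_pathQuiver v (fun l hl => ?_) (fun h => by omega)
    (fun l _ hl => Function.update_of_ne (by omega) _ _) (fun i k hi hk hik d => ?_)
  · rw [show l = j by omega, Function.update_self]
  · have hiv : (i : ℕ) ≠ v := Fin.val_ne_of_ne hi
    have hkv : (k : ℕ) ≠ v := Fin.val_ne_of_ne hk
    by_cases hij : (i : ℕ) = j
    · refine mutationCorrection_of_right_eq_zero (pathQuiver_of_not_adj ?_ ?_)
      · omega
      · have := Fin.val_ne_of_ne hik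
        omega
    · exact mutationCorrection_of_left_eq_zero (pathQuiver_of_not_adj (by omega) (by omega))

theorem mutate_pathQuiver_of_ne_zero_of_ne_last {j : ℕ} (v : Fin n) (hv : (v : ℕ) = j + 1)
    (hj : c j ≠ 0) (hj' : c (j + 1) ≠ Fin.last m) :
    mutate (pathQuiver m n c) v =
      pathQuiver m n (Function.update (Function.update c j (c j + 1)) (j + 1) (c (j + 1) - 1)) := by
  refine mutate_pathQuiver v (fun l hl => ?_) (fun _ => ?_) (fun l hl hl' => ?_)
    (fun i k _ _ _ d => mutationCorrection_eq_zero ?_ ?_)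
  · rw [Function.update_of_ne (by omega), show l = j by omega, Function.update_self]
  · rw [hv, Function.update_self]
  · rw [Function.update_of_ne (by omega), Function.update_of_ne (by omega)]
  · by_cases h₁ : (k : ℕ) + 1 = v
    · simpa [pathQuiver_of_succ_eq h₁, show (k : ℕ) = j by omega] using hj.symm
    by_cases h₂ : (v : ℕ) + 1 = k
    · rw [pathQuiver_of_eq_succ h₂, hv]
      exact if_neg (by rw [eq_comm, Fin.rev_eq_iff, Fin.rev_zero]; exact hj')
    exact pathQuiver_of_not_adj h₁ h₂ 0
  · by_cases h₁ : (v : ℕ) + 1 = i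
    · simpa [pathQuiver_of_succ_eq h₁, hv] using hj'.symm
    by_cases h₂ : (i : ℕ) + 1 = v
    · rw [pathQuiver_of_eq_succ h₂, show (i : ℕ) = j by omega]
      exact if_neg (by rw [eq_comm, Fin.rev_eq_iff, Fin.rev_last]; exact hj)
    exact pathQuiver_of_not_adj h₁ h₂ _

end PathMutation

section Reduction

variable {m n : ℕ}

theorem mutEquiv_update_add_one (hm : 1 ≤ m) (c : ℕ → Fin (m + 1)) (j : ℕ) (hj : j + 1 < n)
    (hcj : c j ≠ 0) (htail : ∀ l, j < l → l + 1 < n → c l = 0) :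
    MutEquiv (pathQuiver m n c) (pathQuiver m n (Function.update c j (c j + 1))) := by
  by_cases hend : j + 2 = n
  · rw [← mutate_pathQuiver_last ⟨j + 1, hj⟩ rfl hend]
    exact mutEquiv_mutate _ _
  have hlast_ne_zero : Fin.last m ≠ 0 := Fin.pos_iff_ne_zero.mp hm
  have hzero : c (j + 1) = 0 := htail _ (by omega) (by omega)
  set c₁ := Function.update (Function.update c j (c j + 1)) (j + 1) (c (j + 1) - 1) with hc₁_def
  have hc₁ : c₁ (j + 1) = Fin.last m := by
    rw [hc₁_def, Function.update_self, hzero, sub_eq_iff_eq_add, Fin.last_add_one]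
  have step₁ : MutEquiv (pathQuiver m n c) (pathQuiver m n c₁) := by
    rw [← mutate_pathQuiver_of_ne_zero_of_ne_last ⟨j + 1, hj⟩ rfl hcj
      (hzero ▸ hlast_ne_zero.symm)]
    exact mutEquiv_mutate _ _
  have step₂ := mutEquiv_update_add_one hm c₁ (j + 1) (by omega) (hc₁ ▸ hlast_ne_zero)
    (fun l hl hln => by
      rw [hc₁_def, Function.update_of_ne (by omega), Function.update_of_ne (by omega)]
      exact htail l (by omega) hln)
  have hback : Function.update c₁ (j + 1) (c₁ (j + 1) + 1) = Function.update c j (c j + 1) := by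
    rw [hc₁_def, Function.update_self, sub_add_cancel, Function.update_idem,
      Function.update_eq_self_iff, Function.update_of_ne (by omega)]
  exact step₁.trans (hback ▸ step₂)
termination_by n - j

theorem mutEquiv_update_zero (hm : 1 ≤ m) (c : ℕ → Fin (m + 1)) (j : ℕ) (hj : j + 1 < n)
    (htail : ∀ l, j < l → l + 1 < n → c l = 0) (a : Fin (m + 1)) :
    MutEquiv (pathQuiver m n (Function.update c j a)) (pathQuiver m n (Function.update c j 0)) := by
  have htail' : ∀ a : Fin (m + 1), ∀ l, j < l → l + 1 < n → Function.update c j a l = 0 :=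
    fun a l hl hln => by rw [Function.update_of_ne (by omega)]; exact htail l hl hln
  have hstep (a : Fin (m + 1)) (ha : a ≠ 0) : MutEquiv (pathQuiver m n (Function.update c j a))
      (pathQuiver m n (Function.update c j (a + 1))) := by
    simpa using mutEquiv_update_add_one hm _ j hj (by simpa using ha) (htail' a)
  induction a using Fin.reverseInduction with
  | last => simpa using hstep _ (Fin.pos_iff_ne_zero.mp (show 0 < Fin.last m from hm))
  | cast b ih =>
    by_cases hb : b.castSucc = 0
    · rw [hb]
      exact MutEquiv.refl _
    · exact (Fin.coeSucc_eq_succ ▸ hstep _ hb).trans ih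

theorem mutEquiv_pathQuiver_zero (hm : 1 ≤ m) (c : ℕ → Fin (m + 1)) :
    MutEquiv (pathQuiver m n c) (pathQuiver m n 0) := by
  suffices h : ∀ J, ∀ c : ℕ → Fin (m + 1), (∀ l, J ≤ l → l + 1 < n → c l = 0) →
      MutEquiv (pathQuiver m n c) (pathQuiver m n 0) from h (n - 1) c (fun l _ _ => by omega)
  intro J
  induction J with
  | zero =>
    intro c hc
    rw [pathQuiver_congr (fun l hl => hc l l.zero_le hl)]
    exact MutEquiv.refl _
  | succ J ih =>
    intro c hc
    by_cases hJ : J + 1 < n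
    · have h := mutEquiv_update_zero hm c J hJ hc (c J)
      rw [Function.update_eq_self] at h
      refine h.trans (ih _ fun l hl hln => ?_)
      rcases hl.eq_or_lt with rfl | hl
      · exact Function.update_self _ _ _
      · rw [Function.update_of_ne hl.ne']
        exact hc l hl hln
    · exact ih c fun l hl hln => hc l (by omega) hln

end Reduction

theorem path_colourations_mutEquiv_general (m n : ℕ) (hm : 1 ≤ m)
    (c c' : ℕ → Fin (m + 1)) :
    MutEquiv (pathQuiver m n c) (pathQuiver m n c') :=
  (mutEquiv_pathQuiver_zero hm c).trans (mutEquiv_pathQuiver_zero hm c').symm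

/-- All colourations of `Aₙ` are mutation equivalent. -/
theorem path_colourations_mutEquiv (m n : ℕ) (hm : 1 ≤ m) (hn : 1 ≤ n)
    (c c' : ℕ → Fin (m + 1)) :
    MutEquiv (pathQuiver m n c) (pathQuiver m n c') :=
  path_colourations_mutEquiv_general m n hm c c'

end MutClassAn
end

section
/- Let Q be an m-coloured quiver in the class Q_n^m (equivalently, in the coloured mutation class of A_n) and let Q' be its 0-coloured part, i.e. the quiver with the same vertices containing exactly the arrows of Q of colour 0. Suppose c = (x_1 x_2 ⋯ x_k) is a k-cycle in Q', i.e. a closed directed path x_1 → x_2 → … → x_k → x_1 in Q' with x_1, …, x_k pairwise distinct and k ≥ 3. Then k = m + 2. -/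
/-!
The underlying graph of a quiver in `𝒬ₙᵐ` has no holes, and by condition (1) every neighbourhood
in it is a disjoint union of cliques. In such a graph every cycle spans a clique: a chord splits a
long cycle into two shorter ones, cliques by induction, and a vertex strictly inside one of them
is adjacent to a vertex strictly inside the other, since both lie in the neighbourhood of one
endpoint of the chord and are joined there through the other endpoint. So a `0`-coloured
`k`-cycle lies in a clique, and `k ≤ m + 2` by (1).

Modulo `m + 2`, skew-symmetry and condition (2) read `c(a,b) + c(b,a) = -2` and
`c(a,b) + c(b,c) + c(c,a) = -3`; triangulating a cycle of length `k` in a clique as a fan from one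
vertex then shows that its colour sum is `-k`. A `0`-coloured cycle therefore has `m + 2 ∣ k`.
-/

namespace MutClassAn

open Finset

variable {V : Type}

section CyclicSeq

-- A cycle `y 0 → ⋯ → y n → y 0` along `r`; values of `y` beyond `n` play no role.
structure IsCyclicSeq (r : V → V → Prop) (y : ℕ → V) (n : ℕ) : Prop where
  injOn : Set.InjOn y (Set.Iic n)
  adj_succ : ∀ i < n, r (y i) (y (i + 1))
  adj_last : r (y n) (y 0)

variable (G : SimpleGraph V)

-- `q - p < n` rules out the closing edge `y n — y 0`.
def Chordal : Prop :=
  ∀ (y : ℕ → V) (n : ℕ), 3 ≤ n → IsCyclicSeq G.Adj y n →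
    ∃ p q, p + 2 ≤ q ∧ q ≤ n ∧ q - p < n ∧ G.Adj (y p) (y q)

/-- Every neighbourhood induces a disjoint union of cliques. -/
def LocallyCluster : Prop :=
  ∀ ⦃v a b c : V⦄, G.Adj v a → G.Adj v b → G.Adj v c → G.Adj a b → G.Adj b c → a ≠ c →
    G.Adj a c

variable {G} {r s : V → V → Prop}

theorem cyc_eq_add_one {n : ℕ} (i : Fin (n + 1)) : cyc i = i + 1 := by
  ext
  simp [cyc, Fin.val_add]

open Fin.NatCast in
theorem isCyclicSeq_comp_natCast {n : ℕ} {x : Fin (n + 1) → V} (hinj : Function.Injective x)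
    (hadj : ∀ i, r (x i) (x (cyc i))) : IsCyclicSeq r (fun i : ℕ => x (i : Fin (n + 1))) n where
  injOn i hi j hj h := by
    rw [Set.mem_Iic] at hi hj
    simpa [Fin.ext_iff, Fin.val_cast_of_lt (Nat.lt_succ_of_le hi),
      Fin.val_cast_of_lt (Nat.lt_succ_of_le hj)] using hinj h
  adj_succ i _ := by simpa [cyc_eq_add_one] using hadj i
  adj_last := by simpa [cyc_eq_add_one] using hadj (n : Fin (n + 1))

namespace IsCyclicSeq

variable {y : ℕ → V} {n : ℕ}

theorem mono (hy : IsCyclicSeq r y n) (hrs : ∀ a b, r a b → s a b) : IsCyclicSeq s y n where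
  injOn := hy.injOn
  adj_succ i hi := hrs _ _ (hy.adj_succ i hi)
  adj_last := hrs _ _ hy.adj_last

theorem ne (hy : IsCyclicSeq r y n) {i j : ℕ} (hi : i ≤ n) (hj : j ≤ n) (hij : i ≠ j) :
    y i ≠ y j :=
  fun h => hij (hy.injOn hi hj h)

theorem arc (hy : IsCyclicSeq G.Adj y n) {p q : ℕ} (hpq : p ≤ q) (hqn : q ≤ n)
    (hchord : G.Adj (y p) (y q)) : IsCyclicSeq G.Adj (fun i => y (p + i)) (q - p) where
  injOn i hi j hj h := by
    rw [Set.mem_Iic] at hi hj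
    have := hy.injOn (Set.mem_Iic.2 (by omega : p + i ≤ n))
      (Set.mem_Iic.2 (by omega : p + j ≤ n)) h
    omega
  adj_succ i hi := hy.adj_succ (p + i) (by omega)
  adj_last := by
    rw [Nat.add_sub_cancel' hpq]
    exact hchord.symm

theorem shortcut (hy : IsCyclicSeq G.Adj y n) {p q : ℕ} (hpq : p < q) (hqn : q ≤ n)
    (hchord : G.Adj (y p) (y q)) :
    IsCyclicSeq G.Adj (fun i => y (if i ≤ p then i else i + (q - p - 1))) (n - (q - p - 1)) where
  injOn i hi j hj h := by
    rw [Set.mem_Iic] at hi hj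
    have := hy.injOn (Set.mem_Iic.2 (by split_ifs <;> omega))
      (Set.mem_Iic.2 (by split_ifs <;> omega)) h
    split_ifs at this <;> omega
  adj_succ i hi := by
    split_ifs with h1 h2 h2
    · exact hy.adj_succ i (by omega)
    · obtain rfl : i = p := by omega
      rwa [show i + 1 + (q - i - 1) = q by omega]
    · omega
    · rw [show i + 1 + (q - p - 1) = i + (q - p - 1) + 1 by omega]
      exact hy.adj_succ _ (by omega)
  adj_last := by
    rw [if_neg (by omega), if_pos (Nat.zero_le p), show n - (q - p - 1) + (q - p - 1) = n by omega]
    exact hy.adj_last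

theorem isClique_triangle (hy : IsCyclicSeq G.Adj y 2) : G.IsClique (y '' Set.Iic 2) := by
  have h01 := hy.adj_succ 0 (by norm_num)
  have h12 := hy.adj_succ 1 (by norm_num)
  have h20 := hy.adj_last
  rintro _ ⟨i, hi, rfl⟩ _ ⟨j, hj, rfl⟩ hne
  rw [Set.mem_Iic] at hi hj
  interval_cases i <;> interval_cases j <;>
    first
    | exact absurd rfl hne
    | assumption
    | exact h01.symm
    | exact h12.symm
    | exact h20.symm

theorem isClique (hG : Chordal G) (hL : LocallyCluster G) (hy : IsCyclicSeq G.Adj y n)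
    (hn : 2 ≤ n) : G.IsClique (y '' Set.Iic n) := by
  induction n using Nat.strong_induction_on generalizing y with
  | _ n ih =>
  rcases hn.eq_or_lt with rfl | hn
  · exact hy.isClique_triangle
  obtain ⟨p, q, hpq, hqn, hlen, hchord⟩ := hG y n hn hy
  have hA := ih _ (by omega) (hy.arc (by omega) hqn hchord) (by omega)
  have hB := ih _ (by omega) (hy.shortcut (by omega) hqn hchord) (by omega)
  have adjA : ∀ i j, p ≤ i → i ≤ q → p ≤ j → j ≤ q → i ≠ j → G.Adj (y i) (y j) := by
    intro i j hi hi' hj hj' hij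
    refine hA ⟨i - p, ?_, ?_⟩ ⟨j - p, ?_, ?_⟩ (hy.ne (by omega) (by omega) hij) <;>
      simp only [Set.mem_Iic, Nat.add_sub_cancel' hi, Nat.add_sub_cancel' hj] <;> omega
  have adjB : ∀ i j, i ≤ n → j ≤ n → (i ≤ p ∨ q ≤ i) → (j ≤ p ∨ q ≤ j) → i ≠ j →
      G.Adj (y i) (y j) := by
    have mem : ∀ i ≤ n, (i ≤ p ∨ q ≤ i) → ∃ i' ≤ n - (q - p - 1),
        y (if i' ≤ p then i' else i' + (q - p - 1)) = y i := by
      intro i hi hpi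
      by_cases h : i ≤ p
      · exact ⟨i, by omega, by rw [if_pos h]⟩
      · exact ⟨i - (q - p - 1), by omega, by rw [if_neg (by omega), Nat.sub_add_cancel (by omega)]⟩
    intro i j hi hj hpi hpj hij
    obtain ⟨i', hi', hyi⟩ := mem i hi hpi
    obtain ⟨j', hj', hyj⟩ := mem j hj hpj
    rw [← hyi, ← hyj]
    exact hB ⟨i', hi', rfl⟩ ⟨j', hj', rfl⟩ (by simp only [hyi, hyj]; exact hy.ne hi hj hij)
  -- `y p` sees `y i`, `y q` and `y j`, and `y i — y q — y j` is a path in its neighbourhood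
  have cross : ∀ i j, p < i → i < q → j ≤ n → (j < p ∨ q < j) → G.Adj (y i) (y j) :=
    fun i j hi hi' hj hj' => hL (adjA p i le_rfl (by omega) (by omega) hi'.le (by omega))
      hchord (adjB p j (by omega) hj (Or.inl le_rfl) (by omega) (by omega))
      (adjA i q (by omega) hi'.le (by omega) le_rfl (by omega))
      (adjB q j hqn hj (Or.inr le_rfl) (by omega) (by omega)) (hy.ne (by omega) hj (by omega))
  rintro _ ⟨i, hi, rfl⟩ _ ⟨j, hj, rfl⟩ hne
  rw [Set.mem_Iic] at hi hj
  have hij : i ≠ j := fun h => hne (congrArg y h)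
  rcases (by omega : (p ≤ i ∧ i ≤ q ∧ p ≤ j ∧ j ≤ q) ∨ ((i ≤ p ∨ q ≤ i) ∧ (j ≤ p ∨ q ≤ j)) ∨
      (p < i ∧ i < q ∧ (j < p ∨ q < j)) ∨ (p < j ∧ j < q ∧ (i < p ∨ q < i))) with
    h | h | h | h
  · exact adjA i j h.1 h.2.1 h.2.2.1 h.2.2.2 hij
  · exact adjB i j hi hj h.1 h.2 hij
  · exact cross i j h.1 h.2.1 hj h.2.2
  · exact (cross j i h.1 h.2.1 hi h.2.2).symm

end IsCyclicSeq

end CyclicSeq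

theorem sum_colour_cycle_add_length_eq_zero {m n : ℕ} (c : ℕ → ℕ → ZMod (m + 2)) (hn : 1 ≤ n)
    (hskew : ∀ i ≤ n, ∀ j ≤ n, i ≠ j → c i j + c j i = m)
    (htri : ∀ i ≤ n, ∀ j ≤ n, ∀ l ≤ n, i ≠ j → j ≠ l → i ≠ l → c i j + c j l + c l i = m - 1) :
    ∑ i ∈ range n, c i (i + 1) + c n 0 + (n + 1 : ℕ) = 0 := by
  induction n, hn using Nat.le_induction with
  | base =>
    have hm : ((m + 2 : ℕ) : ZMod (m + 2)) = 0 := ZMod.natCast_self _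
    rw [sum_range_one]
    push_cast at hm ⊢
    linear_combination hskew 0 (by omega) 1 le_rfl (by omega) + hm
  | succ n hn ih =>
    -- the triangle `0, n, n + 1` turns the cycle through `0, …, n` into that through `0, …, n + 1`
    have hcycle := ih (fun i hi j hj => hskew i (by omega) j (by omega))
      (fun i hi j hj l hl => htri i (by omega) j (by omega) l (by omega))
    have hskew' := hskew n (by omega) 0 (by omega) (by omega)
    have htri' := htri 0 (by omega) n (by omega) (n + 1) le_rfl (by omega) (by omega) (by omega)
    rw [sum_range_succ]
    push_cast at hcycle ⊢
    linear_combination hcycle + htri' - hskew'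

section Quiver

variable {m : ℕ} {M : V → V → Fin (m + 1) → ℕ}

theorem IsColouredQuiver.cqAdj_symm (hM : IsColouredQuiver M) {i j : V} (h : CQAdj M i j) :
    CQAdj M j i := by
  obtain ⟨hij, c, hc⟩ := h
  exact ⟨hij.symm, c.rev, by rwa [hM.2.2 j i, Fin.rev_rev]⟩

theorem IsColouredQuiver.cqAdj_of_ne_zero (hM : IsColouredQuiver M) {i j : V} {c : Fin (m + 1)}
    (h : M i j c ≠ 0) : CQAdj M i j :=
  ⟨by rintro rfl; exact h (hM.1 i c), c, h⟩

def underlyingGraph (M : V → V → Fin (m + 1) → ℕ) (hM : IsColouredQuiver M) : SimpleGraph V where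
  Adj := CQAdj M
  symm := ⟨fun _ _ => hM.cqAdj_symm⟩
  loopless := ⟨fun _ h => h.1 rfl⟩

theorem colourOf_eq_of_ne_zero (hM : IsColouredQuiver M) (hS : IsSimpleCQ M) {i j : V}
    {c : Fin (m + 1)} (h : M i j c ≠ 0) : colourOf M i j = c := by
  have hone : M i j c = 1 := by
    have := single_le_sum (fun d _ => Nat.zero_le (M i j d)) (mem_univ c)
    have := hS i j
    omega
  have hother : ∀ d ∈ univ, d ≠ c → M i j d * d.val = 0 := fun d _ hd => by
    rw [by_contra fun h' => hd (hM.2.1 i j d c h' h), zero_mul]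
  rw [colourOf, sum_eq_single c hother (by simp), hone, one_mul]

theorem colourOf_add_colourOf (hM : IsColouredQuiver M) (hS : IsSimpleCQ M) {i j : V}
    (h : CQAdj M i j) : colourOf M i j + colourOf M j i = m := by
  obtain ⟨-, c, hc⟩ := h
  have hc' : M j i c.rev ≠ 0 := by rwa [hM.2.2 j i, Fin.rev_rev]
  rw [colourOf_eq_of_ne_zero hM hS hc, colourOf_eq_of_ne_zero hM hS hc', Fin.val_rev]
  omega

-- the two alternatives of `Cond2`, colour sums `m - 1` and `2 m + 1`, agree modulo `m + 2`
theorem colourOf_triangle (hM : IsColouredQuiver M) (hC2 : Cond2 M) {a b c : V}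
    (hab : CQAdj M a b) (hbc : CQAdj M b c) (hca : CQAdj M c a) :
    (colourOf M a b : ZMod (m + 2)) + colourOf M b c + colourOf M c a = m - 1 := by
  have hm : ((m + 2 : ℕ) : ZMod (m + 2)) = 0 := ZMod.natCast_self _
  push_cast at hm
  rcases hC2 b a c hab.1.symm hca.1.symm hbc.1 (hM.cqAdj_symm hab) (hM.cqAdj_symm hca) hbc
    with h | h
  · have := congrArg (Int.cast : ℤ → ZMod (m + 2)) h
    push_cast at this
    linear_combination this
  · have := congrArg (Int.cast : ℤ → ZMod (m + 2)) h
    push_cast at this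
    linear_combination -this + hm

theorem chordal_underlyingGraph (hM : IsColouredQuiver M) (h : ¬ HasHole M) :
    Chordal (underlyingGraph M hM) := by
  intro y n hn hy
  by_contra! hno
  have hval : ∀ z : ZMod (n + 1), (z + 1).val = if z.val < n then z.val + 1 else 0 := by
    intro z
    rw [ZMod.val_add, ZMod.val_one_eq_one_mod, Nat.add_mod_mod]
    have := ZMod.val_lt z
    split_ifs
    · exact Nat.mod_eq_of_lt (by omega)
    · rw [show z.val + 1 = n + 1 by omega, Nat.mod_self]
  refine h ⟨n + 1, by omega, fun z => y z.val, fun z w hzw => ?_, fun z => ?_,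
    fun z w hzw h1 h2 => ?_⟩
  · exact ZMod.val_injective _ (hy.injOn (Nat.le_of_lt_succ (ZMod.val_lt z))
      (Nat.le_of_lt_succ (ZMod.val_lt w)) hzw)
  · have := ZMod.val_lt z
    show CQAdj M (y z.val) (y (z + 1).val)
    rw [hval]
    split_ifs with hz
    · exact hy.adj_succ _ hz
    · rw [show z.val = n by omega]
      exact hy.adj_last
  · have hz := ZMod.val_lt z
    have hw := ZMod.val_lt w
    have hzw' : z.val ≠ w.val := fun e => hzw (ZMod.val_injective _ e)
    have h1' : w.val ≠ (z + 1).val := fun e => h1 (ZMod.val_injective _ e)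
    have h2' : z.val ≠ (w + 1).val := fun e => h2 (ZMod.val_injective _ e)
    rw [hval] at h1' h2'
    intro hadj
    rcases hzw'.lt_or_gt with hlt | hlt
    · exact hno _ _ (by split_ifs at h1' <;> omega) (by omega) (by split_ifs at h2' <;> omega) hadj
    · exact hno _ _ (by split_ifs at h2' <;> omega) (by omega) (by split_ifs at h1' <;> omega)
        (hM.cqAdj_symm hadj)

theorem locallyCluster_underlyingGraph (hM : IsColouredQuiver M) (hC1 : Cond1 M) :
    LocallyCluster (underlyingGraph M hM) := by
  intro v a b c hva hvb hvc hab hbc hac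
  obtain ⟨R, K, -, -, hR, hK, -, -, -, hcover, hsep⟩ := hC1 v ⟨a, hva⟩
  rcases hcover b hvb with hbR | hbK
  · have mem : ∀ u, CQAdj M v u → CQAdj M u b → u ∈ R := fun u hvu hub =>
      (hcover u hvu).resolve_right fun huK =>
        hsep b hbR hvb.1.symm u huK hvu.1.symm (hM.cqAdj_symm hub)
    exact hR (mem a hva hab) (mem c hvc (hM.cqAdj_symm hbc)) hac
  · have mem : ∀ u, CQAdj M v u → CQAdj M u b → u ∈ K := fun u hvu hub =>
      (hcover u hvu).resolve_left fun huR => hsep u huR hvu.1.symm b hbK hvb.1.symm hub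
    exact hK (mem a hva hab) (mem c hvc (hM.cqAdj_symm hbc)) hac

theorem card_le_of_isCliqueCQ (hC1 : Cond1 M) {S : Finset V} (hS : IsCliqueCQ M S) {v w : V}
    (hv : v ∈ S) (hw : w ∈ S) (hvw : v ≠ w) : S.card ≤ m + 2 := by
  obtain ⟨R, K, hvR, hvK, -, -, -, hRm, hKm, hcover, hsep⟩ := hC1 v ⟨w, hS hv hw hvw⟩
  suffices S ⊆ R ∨ S ⊆ K by
    rcases this with h | h
    · exact (card_le_card h).trans hRm
    · exact (card_le_card h).trans hKm
  by_contra! h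
  obtain ⟨⟨a, haS, haR⟩, ⟨b, hbS, hbK⟩⟩ := And.intro (not_subset.1 h.1) (not_subset.1 h.2)
  have hav : a ≠ v := by rintro rfl; exact haR hvR
  have hbv : b ≠ v := by rintro rfl; exact hbK hvK
  have haK := (hcover a (hS hv haS hav.symm)).resolve_left haR
  have hbR := (hcover b (hS hv hbS hbv.symm)).resolve_right hbK
  exact hsep b hbR hbv a haK hav (hS hbS haS (by rintro rfl; exact haR hbR))

theorem length_le_of_isCliqueCQ (hC1 : Cond1 M) {y : ℕ → V} {n : ℕ} (hn : 1 ≤ n)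
    (hinj : Set.InjOn y (Set.Iic n)) (hclique : IsCliqueCQ M (y '' Set.Iic n)) :
    n + 1 ≤ m + 2 := by
  classical
  have hcard : ((Iic n).image y).card = n + 1 := by
    rw [card_image_of_injOn (by rwa [coe_Iic]), Nat.card_Iic]
  rw [← hcard]
  refine card_le_of_isCliqueCQ hC1 (by rwa [coe_image, coe_Iic])
    (mem_image_of_mem y (mem_Iic.2 (Nat.zero_le n))) (mem_image_of_mem y (mem_Iic.2 hn)) fun h => ?_
  exact absurd (hinj (Set.mem_Iic.2 (Nat.zero_le n)) (Set.mem_Iic.2 hn) h) (by omega)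

theorem dvd_length_of_zero_coloured (hM : IsColouredQuiver M) (hS : IsSimpleCQ M) (hC2 : Cond2 M)
    {y : ℕ → V} {n : ℕ} (hzero : IsCyclicSeq (fun a b => M a b 0 ≠ 0) y n) (hn : 1 ≤ n)
    (hclique : IsCliqueCQ M (y '' Set.Iic n)) : m + 2 ∣ n + 1 := by
  have adj : ∀ i ≤ n, ∀ j ≤ n, i ≠ j → CQAdj M (y i) (y j) := fun i hi j hj hij =>
    hclique ⟨i, hi, rfl⟩ ⟨j, hj, rfl⟩ (hzero.ne hi hj hij)
  have h := sum_colour_cycle_add_length_eq_zero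
    (fun i j => (colourOf M (y i) (y j) : ZMod (m + 2))) hn
    (fun i hi j hj hij => by
      simpa using congrArg (Nat.cast : ℕ → ZMod (m + 2))
        (colourOf_add_colourOf hM hS (adj i hi j hj hij)))
    (fun i hi j hj l hl hij hjl hil =>
      colourOf_triangle hM hC2 (adj i hi j hj hij) (adj j hj l hl hjl) (adj l hl i hi hil.symm))
  have hsum : ∀ i ∈ range n, (colourOf M (y i) (y (i + 1)) : ZMod (m + 2)) = 0 := fun i hi => by
    rw [colourOf_eq_of_ne_zero hM hS (hzero.adj_succ i (mem_range.1 hi)), Fin.val_zero,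
      Nat.cast_zero]
  rw [sum_eq_zero hsum, colourOf_eq_of_ne_zero hM hS hzero.adj_last, Fin.val_zero, Nat.cast_zero,
    zero_add, zero_add] at h
  exact (ZMod.natCast_eq_zero_iff _ _).1 h

end Quiver

theorem zero_coloured_cycle_length_general (m : ℕ)
    (V : Type)
    (M : V → V → Fin (m + 1) → ℕ) (hM : MemQClass M)
    (k : ℕ) (hk : 3 ≤ k) (x : Fin k → V) (hinj : Function.Injective x)
    (hcyc : ∀ i : Fin k, M (x i) (x (cyc i)) 0 ≠ 0) :
    k = m + 2 := by
  obtain ⟨hQ, hS, -, hHole, hC1, hC2⟩ := hM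
  obtain ⟨n, rfl⟩ : ∃ n, k = n + 1 := ⟨k - 1, by omega⟩
  have hzero := isCyclicSeq_comp_natCast (r := fun a b => M a b 0 ≠ 0) hinj hcyc
  have hclique := (hzero.mono (s := (underlyingGraph M hQ).Adj)
    fun _ _ => hQ.cqAdj_of_ne_zero).isClique (chordal_underlyingGraph hQ hHole)
    (locallyCluster_underlyingGraph hQ hC1) (by omega)
  have hdvd := dvd_length_of_zero_coloured hQ hS hC2 hzero (by omega) hclique
  have hle := length_le_of_isCliqueCQ hC1 (by omega) hzero.injOn hclique
  exact le_antisymm hle (Nat.le_of_dvd (by omega) hdvd)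

/-- Every cycle in the `0`-coloured part of a quiver in the mutation class of
`Aₙ` has length `m + 2`. -/
theorem zero_coloured_cycle_length (m : ℕ) (hm : 1 ≤ m)
    (V : Type) [Fintype V] [DecidableEq V]
    (M : V → V → Fin (m + 1) → ℕ) (hM : MemQClass M)
    (k : ℕ) (hk : 3 ≤ k) (x : Fin k → V) (hinj : Function.Injective x)
    (hcyc : ∀ i : Fin k, M (x i) (x (cyc i)) 0 ≠ 0) :
    k = m + 2 :=
  zero_coloured_cycle_length_general m V M hM k hk x hinj hcyc

end MutClassAn
end
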